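/- Let f_1,…,f_n : ℝ^d → ℝ (n ≥ 1) each be differentiable with L-Lipschitz continuous gradient (L ≥ 0), and let F : ℝ^d → ℝ be differentiable. Let ν > 0 and x ∈ ℝ^d. Then the averaged forward finite-difference gradient estimate satisfies ‖(1/n)·Σ_{i=1}^n ∇^FD f_i(x) − ∇F(x)‖ ≤ (Lν√d)/2 + ‖(1/n)·Σ_{i=1}^n ∇f_i(x) − ∇F(x)‖; i.e., the total gradient-estimation error is bounded by the finite-difference discretization error plus the stochastic sampling error. -/

import Mathlib

/-!
With an `L`-Lipschitz gradient, the first-order Taylor remainder along a segment is at most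
`L/2 ‖v‖²`. Applied along `ν e_j`, this bounds every coordinate of the forward-difference error by
`Lν/2`, hence its Euclidean norm by `Lν√d/2`. The average of the errors obeys the same bound, and
the triangle inequality through the averaged true gradient finishes the proof.
-/

open MeasureTheory
open scoped RealInnerProductSpace

noncomputable def fdGrad {d : ℕ} (ν : ℝ) (g : EuclideanSpace ℝ (Fin d) → ℝ)
    (x : EuclideanSpace ℝ (Fin d)) : EuclideanSpace ℝ (Fin d) :=
  (WithLp.equiv 2 (Fin d → ℝ)).symm
    fun j => (g (x + ν • EuclideanSpace.single j (1:ℝ)) - g x) / ν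

theorem abs_sub_sub_inner_gradient_le {E : Type*} [NormedAddCommGroup E]
    [InnerProductSpace ℝ E] [CompleteSpace E] {g : E → ℝ} {L : ℝ} (hg : Differentiable ℝ g)
    (hLip : ∀ x y, ‖gradient g x - gradient g y‖ ≤ L * ‖x - y‖) (x v : E) :
    |g (x + v) - g x - ⟪gradient g x, v⟫| ≤ L / 2 * ‖v‖ ^ 2 := by
  have hderiv (t : ℝ) : HasDerivAt (fun t : ℝ => g (x + t • v) - g x - t * ⟪gradient g x, v⟫)
      ⟪gradient g (x + t • v) - gradient g x, v⟫ t := by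
    have hline : HasDerivAt (fun t : ℝ => x + t • v) v t := by
      simpa using ((hasDerivAt_id t).smul_const v).const_add x
    have hcomp := (hg (x + t • v)).hasGradientAt.hasFDerivAt.comp_hasDerivAt t hline
    rw [InnerProductSpace.toDual_apply_apply] at hcomp
    rw [inner_sub_left]
    exact (hcomp.sub_const (g x)).sub (hasDerivAt_mul_const _)
  -- fence the remainder by `L/2 ‖v‖² t²`, whose derivative dominates that of the remainder
  have hbound (t : ℝ) (ht : t ∈ Set.Ico (0 : ℝ) 1) :
      ‖⟪gradient g (x + t • v) - gradient g x, v⟫‖ ≤ L * ‖v‖ ^ 2 * t := by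
    calc ‖⟪gradient g (x + t • v) - gradient g x, v⟫‖
        ≤ ‖gradient g (x + t • v) - gradient g x‖ * ‖v‖ := norm_inner_le_norm _ _
      _ ≤ L * ‖t • v‖ * ‖v‖ := by
          gcongr
          simpa using hLip (x + t • v) x
      _ = L * ‖v‖ ^ 2 * t := by
          rw [norm_smul, Real.norm_of_nonneg ht.1]
          ring
  have hB (t : ℝ) : HasDerivAt (fun t : ℝ => L / 2 * ‖v‖ ^ 2 * t ^ 2) (L * ‖v‖ ^ 2 * t) t :=
    ((hasDerivAt_pow 2 t).const_mul _).congr_deriv (by ring)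
  have hfence := image_norm_le_of_norm_deriv_right_le_deriv_boundary
    (fun t _ => (hderiv t).continuousAt.continuousWithinAt)
    (fun t _ => (hderiv t).hasDerivWithinAt) (by simp) hB hbound (b := 1)
    (Set.right_mem_Icc.2 zero_le_one)
  simpa using hfence

theorem EuclideanSpace.norm_le_sqrt_card_mul {ι : Type*} [Fintype ι] (w : EuclideanSpace ℝ ι)
    {c : ℝ} (hc : 0 ≤ c) (hw : ∀ j, |w j| ≤ c) : ‖w‖ ≤ √(Fintype.card ι) * c := by
  calc ‖w‖ = √(∑ j, ‖w j‖ ^ 2) := EuclideanSpace.norm_eq w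
    _ ≤ √(∑ _j : ι, c ^ 2) := by
        gcongr with j
        exact (Real.norm_eq_abs _).trans_le (hw j)
    _ = √(Fintype.card ι) * c := by
        rw [Finset.sum_const, Finset.card_univ, nsmul_eq_mul, Real.sqrt_mul (by positivity),
          Real.sqrt_sq hc]

theorem fdGrad_apply {d : ℕ} (ν : ℝ) (g : EuclideanSpace ℝ (Fin d) → ℝ)
    (x : EuclideanSpace ℝ (Fin d)) (j : Fin d) :
    fdGrad ν g x j = (g (x + ν • EuclideanSpace.single j 1) - g x) / ν :=
  rfl

theorem norm_fdGrad_sub_gradient_le {d : ℕ} {g : EuclideanSpace ℝ (Fin d) → ℝ} {L ν : ℝ}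
    (hL : 0 ≤ L) (hν : 0 < ν) (hg : Differentiable ℝ g)
    (hLip : ∀ x y, ‖gradient g x - gradient g y‖ ≤ L * ‖x - y‖) (x : EuclideanSpace ℝ (Fin d)) :
    ‖fdGrad ν g x - gradient g x‖ ≤ L * ν * √d / 2 := by
  have hcoord (j : Fin d) : |(fdGrad ν g x - gradient g x) j| ≤ L * ν / 2 := by
    have hstep := abs_sub_sub_inner_gradient_le hg hLip x (ν • EuclideanSpace.single j 1)
    rw [real_inner_smul_right, EuclideanSpace.inner_single_right, norm_smul,
      PiLp.norm_single, norm_one, Real.norm_of_nonneg hν.le, mul_one, one_mul,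
      starRingEnd_apply, star_trivial] at hstep
    rw [PiLp.sub_apply, fdGrad_apply, div_sub' hν.ne', abs_div, abs_of_pos hν, div_le_iff₀ hν]
    linarith
  have hnorm := EuclideanSpace.norm_le_sqrt_card_mul _ (by positivity) hcoord
  rw [Fintype.card_fin] at hnorm
  linarith

theorem norm_average_le {ι E : Type*} [SeminormedAddCommGroup E] [NormedSpace ℝ E]
    {s : Finset ι} {u : ι → E} {C : ℝ} (hC : 0 ≤ C) (hu : ∀ i ∈ s, ‖u i‖ ≤ C) :
    ‖(1 / (s.card : ℝ)) • ∑ i ∈ s, u i‖ ≤ C := by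
  rcases s.eq_empty_or_nonempty with rfl | hs
  · simpa using hC
  have hcard : (0 : ℝ) < s.card := by exact_mod_cast hs.card_pos
  calc ‖(1 / (s.card : ℝ)) • ∑ i ∈ s, u i‖
      ≤ 1 / s.card * (s.card * C) := by
        rw [norm_smul, Real.norm_of_nonneg (by positivity)]
        gcongr
        simpa using norm_sum_le_of_le s hu
    _ = C := by field_simp

theorem stmt14_general {d n : ℕ} (L ν : ℝ) (hL : 0 ≤ L) (hν : 0 < ν)
    (f : Fin n → EuclideanSpace ℝ (Fin d) → ℝ)
    (hdiff : ∀ i, Differentiable ℝ (f i))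
    (hLip : ∀ i x y, ‖gradient (f i) x - gradient (f i) y‖ ≤ L * ‖x - y‖)
    (F : EuclideanSpace ℝ (Fin d) → ℝ)
    (x : EuclideanSpace ℝ (Fin d)) :
    ‖(1 / (n : ℝ)) • ∑ i, fdGrad ν (f i) x - gradient F x‖
      ≤ L * ν * Real.sqrt d / 2
        + ‖(1 / (n : ℝ)) • ∑ i, gradient (f i) x - gradient F x‖ := by
  have hdiscr : ‖(1 / (n : ℝ)) • ∑ i, fdGrad ν (f i) x - (1 / (n : ℝ)) • ∑ i, gradient (f i) x‖
      ≤ L * ν * √d / 2 := by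
    rw [← smul_sub, ← Finset.sum_sub_distrib]
    simpa using norm_average_le (s := Finset.univ) (by positivity)
      fun i _ => norm_fdGrad_sub_gradient_le hL hν (hdiff i) (hLip i) x
  linarith [norm_sub_le_norm_sub_add_norm_sub ((1 / (n : ℝ)) • ∑ i, fdGrad ν (f i) x)
    ((1 / (n : ℝ)) • ∑ i, gradient (f i) x) (gradient F x)]

theorem stmt14 {d n : ℕ} (hn : 1 ≤ n) (L ν : ℝ) (hL : 0 ≤ L) (hν : 0 < ν)
    (f : Fin n → EuclideanSpace ℝ (Fin d) → ℝ)
    (hdiff : ∀ i, Differentiable ℝ (f i))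
    (hLip : ∀ i x y, ‖gradient (f i) x - gradient (f i) y‖ ≤ L * ‖x - y‖)
    (F : EuclideanSpace ℝ (Fin d) → ℝ) (hF : Differentiable ℝ F)
    (x : EuclideanSpace ℝ (Fin d)) :
    ‖(1 / (n : ℝ)) • ∑ i, fdGrad ν (f i) x - gradient F x‖
      ≤ L * ν * Real.sqrt d / 2
        + ‖(1 / (n : ℝ)) • ∑ i, gradient (f i) x - gradient F x‖ :=
  stmt14_general L ν hL hν f hdiff hLip F x
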